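/- Let S = U ++ [c] ++ V be a string in which c does not occur in V (so the displayed occurrence of c is the last occurrence of c in S). Then for every string T, the delete–insert edit distance satisfies d_DI(S, T ++ [c]) = min( 1 + d_DI(S, T), |V| + d_DI(U, T) ); that is, if the last character of the target is matched to an occurrence in the source, it is optimal to match it to the last such occurrence. -/

import Mathlib

/-- `StepsIn R k S T` holds if there is a sequence of exactly `k` steps of the
relation `R` transforming `S` into `T`. -/
def StepsIn {α : Type*} (R : List α → List α → Prop) : ℕ → List α → List α → Prop
  | 0, S, T => S = T
  | n + 1, S, T => ∃ M, R S M ∧ StepsIn R n M T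

/-- A single delete or insert operation on a string. -/
inductive DIStep {α : Type*} : List α → List α → Prop
  | del (U V : List α) (c : α) : DIStep (U ++ [c] ++ V) (U ++ V)
  | ins (U V : List α) (c : α) : DIStep (U ++ V) (U ++ [c] ++ V)

/-- The delete–insert edit distance: the minimum number of single-character
deletions and insertions transforming `S` into `T`. -/
noncomputable def dDI {α : Type*} (S T : List α) : ℕ :=
  sInf {n | StepsIn DIStep n S T}

/-- The length of a longest common subsequence of `S` and `T`. -/
noncomputable def lcss {α : Type*} (S T : List α) : ℕ :=
  sSup {n | ∃ L : List α, L.Sublist S ∧ L.Sublist T ∧ L.length = n}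


/-! The identity `dDI S T + 2 * lcss S T = |S| + |T|` turns the claim, for `S = U ++ [c] ++ V`,
into `lcss S (T ++ [c]) = max (lcss S T) (lcss U T + 1)`. A common subsequence ending in the final
`c` of the target must match it to an occurrence of `c` in `S`, and since `c ∉ V` the rest of it
then lies in `U`. -/

namespace StepsIn

variable {α : Type*} {R : List α → List α → Prop}

theorem single {S T : List α} (h : R S T) : StepsIn R 1 S T := ⟨T, h, rfl⟩

theorem trans {m n : ℕ} {S M T : List α} (h₁ : StepsIn R m S M) (h₂ : StepsIn R n M T) :
    StepsIn R (m + n) S T := by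
  induction m generalizing S with
  | zero =>
    obtain rfl : S = M := h₁
    simpa using h₂
  | succ m ih =>
    obtain ⟨X, hSX, hXM⟩ := h₁
    rw [Nat.succ_add]
    exact ⟨X, hSX, ih hXM⟩

theorem symm (hR : ∀ ⦃S T⦄, R S T → R T S) {n : ℕ} {S T : List α} (h : StepsIn R n S T) :
    StepsIn R n T S := by
  induction n generalizing S with
  | zero => exact Eq.symm h
  | succ n ih =>
    obtain ⟨M, hSM, hMT⟩ := h
    exact (ih hMT).trans (single (hR hSM))

theorem map (f : List α → List α) (hf : ∀ ⦃S T⦄, R S T → R (f S) (f T)) {n : ℕ}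
    {S T : List α} (h : StepsIn R n S T) : StepsIn R n (f S) (f T) := by
  induction n generalizing S with
  | zero => exact congrArg f (h : S = T)
  | succ n ih =>
    obtain ⟨M, hSM, hMT⟩ := h
    exact ⟨f M, hf hSM, ih hMT⟩

end StepsIn

namespace DIStep

variable {α : Type*}

theorem symm {S T : List α} : DIStep S T → DIStep T S
  | del U V c => ins U V c
  | ins U V c => del U V c

theorem append_left (P : List α) {S T : List α} (h : DIStep S T) : DIStep (P ++ S) (P ++ T) := by
  cases h with
  | del U V c => simpa using del (P ++ U) V c
  | ins U V c => simpa using ins (P ++ U) V c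

end DIStep

theorem StepsIn.of_sublist {α : Type*} {L S : List α} (h : L.Sublist S) :
    StepsIn DIStep (S.length - L.length) S L := by
  induction h with
  | slnil => rfl
  | @cons L S a h ih =>
    have hlen : (a :: S).length - L.length = 1 + (S.length - L.length) := by
      simp only [List.length_cons]; have := h.length_le; omega
    rw [hlen]
    exact (single (by simpa using DIStep.del [] S a)).trans ih
  | @cons_cons L S a h ih =>
    simpa using ih.map (R := DIStep) ([a] ++ ·) fun _ _ => DIStep.append_left [a]

section lcss

variable {α : Type*}

theorem bddAbove_lcss_set (S T : List α) :
    BddAbove {n | ∃ L : List α, L.Sublist S ∧ L.Sublist T ∧ L.length = n} :=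
  ⟨S.length, by rintro _ ⟨L, hS, -, rfl⟩; exact hS.length_le⟩

theorem exists_sublist_length_eq_lcss (S T : List α) :
    ∃ L : List α, L.Sublist S ∧ L.Sublist T ∧ L.length = lcss S T :=
  (Nat.sSup_mem · (bddAbove_lcss_set S T)) ⟨0, [], List.nil_sublist S, List.nil_sublist T, rfl⟩

theorem length_le_lcss {L S T : List α} (hS : L.Sublist S) (hT : L.Sublist T) :
    L.length ≤ lcss S T :=
  le_csSup (bddAbove_lcss_set S T) ⟨L, hS, hT, rfl⟩

theorem lcss_mono_left {S S' : List α} (T : List α) (h : S.Sublist S') :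
    lcss S T ≤ lcss S' T := by
  obtain ⟨L, hS, hT, hL⟩ := exists_sublist_length_eq_lcss S T
  exact hL ▸ length_le_lcss (hS.trans h) hT

theorem lcss_mono_right (S : List α) {T T' : List α} (h : T.Sublist T') :
    lcss S T ≤ lcss S T' := by
  obtain ⟨L, hS, hT, hL⟩ := exists_sublist_length_eq_lcss S T
  exact hL ▸ length_le_lcss hS (hT.trans h)

theorem lcss_append_singleton_append_le (A B T : List α) (d : α) :
    lcss (A ++ [d] ++ B) T ≤ lcss (A ++ B) T + 1 := by
  obtain ⟨L, hS, hT, hL⟩ := exists_sublist_length_eq_lcss (A ++ [d] ++ B) T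
  obtain ⟨L₁, L₂, rfl, hL₁, hL₂⟩ := List.sublist_append_iff.mp hS
  obtain ⟨M₁, M₂, rfl, hM₁, hM₂⟩ := List.sublist_append_iff.mp hL₁
  have hdrop : (M₁ ++ L₂).Sublist (M₁ ++ M₂ ++ L₂) := by simp
  have := length_le_lcss (hM₁.append hL₂) (hdrop.trans hT)
  have := hM₂.length_le
  simp only [List.length_append, List.length_singleton] at *
  omega

end lcss

section dDI

variable {α : Type*}

theorem length_add_length_le_of_stepsIn {n : ℕ} {S T : List α} (h : StepsIn DIStep n S T) :
    S.length + T.length ≤ n + 2 * lcss S T := by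
  induction n generalizing S with
  | zero =>
    obtain rfl : S = T := h
    have := length_le_lcss (List.Sublist.refl S) (List.Sublist.refl S)
    omega
  | succ n ih =>
    obtain ⟨M, hSM, hMT⟩ := h
    have := ih hMT
    cases hSM with
    | del A B d =>
      have : lcss (A ++ B) T ≤ lcss (A ++ [d] ++ B) T := lcss_mono_left T (by simp)
      simp only [List.length_append, List.length_singleton] at *
      omega
    | ins A B d =>
      have := lcss_append_singleton_append_le A B T d
      simp only [List.length_append, List.length_singleton] at *
      omega

theorem dDI_add_two_mul_lcss (S T : List α) :
    dDI S T + 2 * lcss S T = S.length + T.length := by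
  obtain ⟨L, hS, hT, hL⟩ := exists_sublist_length_eq_lcss S T
  have hpath : StepsIn DIStep ((S.length - L.length) + (T.length - L.length)) S T :=
    (StepsIn.of_sublist hS).trans ((StepsIn.of_sublist hT).symm fun _ _ => DIStep.symm)
  have hle : dDI S T ≤ (S.length - L.length) + (T.length - L.length) := Nat.sInf_le hpath
  have hmin : StepsIn DIStep (dDI S T) S T :=
    Nat.sInf_mem (s := {n | StepsIn DIStep n S T}) ⟨_, hpath⟩
  have hge := length_add_length_le_of_stepsIn hmin
  have := hS.length_le
  have := hT.length_le
  omega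

end dDI

theorem List.Sublist.of_append_singleton_of_not_mem {α : Type*} {L U V : List α} {c : α}
    (hc : c ∉ V) (h : (L ++ [c]).Sublist (U ++ [c] ++ V)) : L.Sublist U := by
  obtain ⟨A, B, hAB, hA, hB⟩ := List.sublist_append_iff.mp h
  rcases B.eq_nil_or_concat with rfl | ⟨B, x, rfl⟩
  · rw [List.append_nil] at hAB
    exact (List.append_sublist_append_right [c]).mp (hAB ▸ hA)
  · have hx : x = c := by simpa using (congrArg List.getLast? hAB).symm
    exact absurd (hB.subset (by simp [hx])) hc

theorem lcss_append_singleton_of_not_mem {α : Type*} {U V T : List α} {c : α} (hc : c ∉ V) :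
    lcss (U ++ [c] ++ V) (T ++ [c]) = max (lcss (U ++ [c] ++ V) T) (lcss U T + 1) := by
  refine le_antisymm ?_ (max_le (lcss_mono_right _ (List.sublist_append_left T [c])) ?_)
  · obtain ⟨L, hS, hT, hL⟩ := exists_sublist_length_eq_lcss (U ++ [c] ++ V) (T ++ [c])
    obtain ⟨L₁, L₂, rfl, hL₁, hL₂⟩ := List.sublist_append_iff.mp hT
    rw [← hL]
    rcases List.sublist_singleton.mp hL₂ with rfl | rfl
    · rw [List.append_nil] at hS ⊢
      exact le_max_of_le_left (length_le_lcss hS hL₁)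
    · have := length_le_lcss (hS.of_append_singleton_of_not_mem hc) hL₁
      simp only [List.length_append, List.length_singleton]
      exact le_max_of_le_right (by omega)
  · obtain ⟨L, hU, hT, hL⟩ := exists_sublist_length_eq_lcss U T
    have hS : (L ++ [c]).Sublist (U ++ [c] ++ V) :=
      (hU.append_right [c]).trans (List.sublist_append_left _ V)
    simpa [hL] using length_le_lcss hS (hT.append_right [c])

theorem dDI_append_last_occurrence_general {α : Type*}
    (U V T : List α) (c : α) (hc : c ∉ V) :
    dDI (U ++ [c] ++ V) (T ++ [c]) =
      min (1 + dDI (U ++ [c] ++ V) T) (V.length + dDI U T) := by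
  have h₁ := dDI_add_two_mul_lcss (U ++ [c] ++ V) (T ++ [c])
  have h₂ := dDI_add_two_mul_lcss (U ++ [c] ++ V) T
  have h₃ := dDI_add_two_mul_lcss U T
  rw [lcss_append_singleton_of_not_mem hc] at h₁
  simp only [List.length_append, List.length_singleton] at h₁ h₂ h₃
  omega

theorem dDI_append_last_occurrence {α : Type*} [DecidableEq α]
    (U V T : List α) (c : α) (hc : c ∉ V) :
    dDI (U ++ [c] ++ V) (T ++ [c]) =
      min (1 + dDI (U ++ [c] ++ V) T) (V.length + dDI U T) :=
  dDI_append_last_occurrence_general U V T c hc
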